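/- arXiv:1702.03058 — 2 statements merged into one kernel-verified Lean document; each statement's English description precedes it below -/
import Mathlib

section
/- Let (R, m) be a Noetherian local domain birationally dominated by a discrete valuation ring V (rank 1 discrete). Then V equals the union of the sequence of local quadratic transforms of R along V. -/
section LQT

variable (F : Type) [Field F] {Γ : Type} [AddCommGroup Γ] [LinearOrder Γ] [IsOrderedAddMonoid Γ]

/-- The maximal ideal (as a set) of a local subring `A` of `F` dominated by the valuation
ring of the (additive) valuation `v`. -/
def lqtMaxSet (v : F → Γ) (A : Subring F) : Set F :=
  {a | a ∈ A ∧ (a = 0 ∨ 0 < v a)}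

/-- The ring `A[m_A/x]`. -/
def lqtBlowup (v : F → Γ) (A : Subring F) (x : F) : Subring F :=
  Subring.closure ((A : Set F) ∪ {y | ∃ a ∈ lqtMaxSet F v A, y * x = a})

/-- The localization of a subring `B` of `F` at the center of the valuation `v`. -/
def lqtLocalize (v : F → Γ) (B : Subring F) : Set F :=
  {y | ∃ b ∈ B, ∃ s ∈ B, s ≠ 0 ∧ v s = 0 ∧ y * s = b}

/-- `A'` is the local quadratic transform of `A` along the valuation `v`. -/
def IsLQTAlong (v : F → Γ) (A A' : Subring F) : Prop :=
  ∃ x ∈ lqtMaxSet F v A, x ≠ 0 ∧ (∀ a ∈ lqtMaxSet F v A, a ≠ 0 → v x ≤ v a) ∧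
    (A' : Set F) = lqtLocalize F v (lqtBlowup F v A x)

end LQT

/-!
Write `a ∈ V` as `b / c` with `b, c ∈ R₀`. If `v c = 0` then `c` is a unit of the ring and
`a` lies in it. Otherwise `c` and `b` lie in the maximal ideal, so the transform along
`x ∈ m` contains `b / x` and `c / x`, and `a = (b / x) / (c / x)` with a denominator of value
`v c - v x < v c`. The values of the denominators are non-negative integers, so after finitely
many transforms the denominator becomes a unit.
-/

section LQTStep

variable {F : Type} [Field F] {Γ : Type} [AddCommGroup Γ] {v : F → Γ}

lemma val_one_eq_zero (hmul : ∀ a b : F, a ≠ 0 → b ≠ 0 → v (a * b) = v a + v b) : v 1 = 0 := by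
  have h := hmul 1 1 one_ne_zero one_ne_zero
  rw [mul_one] at h
  exact left_eq_add.mp h

lemma subset_lqtLocalize (hv1 : v 1 = 0) (B : Subring F) : (B : Set F) ⊆ lqtLocalize F v B :=
  fun y hy => ⟨y, hy, 1, B.one_mem, one_ne_zero, hv1, mul_one y⟩

lemma div_mem_lqtBlowup [LinearOrder Γ] {A : Subring F} {b x : F} (hb : b ∈ lqtMaxSet F v A)
    (hx : x ≠ 0) :
    b / x ∈ lqtBlowup F v A x :=
  Subring.subset_closure (Or.inr ⟨b, hb, div_mul_cancel₀ b hx⟩)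

lemma IsLQTAlong.exists_mul_eq_of_val_lt [LinearOrder Γ] [IsOrderedAddMonoid Γ]
    (hmul : ∀ a b : F, a ≠ 0 → b ≠ 0 → v (a * b) = v a + v b)
    {A A' : Subring F} (h : IsLQTAlong F v A A') {a b c : F} (ha : a ≠ 0) (hva : 0 ≤ v a)
    (hb : b ∈ A) (hc : c ∈ A) (hc0 : c ≠ 0) (hvc : 0 < v c) (habc : a * c = b) :
    ∃ b' ∈ A', ∃ c' ∈ A', c' ≠ 0 ∧ v c' < v c ∧ a * c' = b' := by
  obtain ⟨x, hxm, hx0, -, hA'⟩ := h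
  have hvb : 0 < v b := by
    rw [← habc, hmul a c ha hc0]
    exact add_pos_of_nonneg_of_pos hva hvc
  have hdiv_mem : ∀ y ∈ lqtMaxSet F v A, y / x ∈ A' := fun y hy => by
    change y / x ∈ (A' : Set F)
    rw [hA']
    exact subset_lqtLocalize (val_one_eq_zero hmul) _ (div_mem_lqtBlowup hy hx0)
  have hvc_eq : v c = v (c / x) + v x := by
    rw [← hmul _ _ (div_ne_zero hc0 hx0) hx0, div_mul_cancel₀ c hx0]
  refine ⟨b / x, hdiv_mem b ⟨hb, Or.inr hvb⟩, c / x, hdiv_mem c ⟨hc, Or.inr hvc⟩,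
    div_ne_zero hc0 hx0, ?_, by rw [← habc, mul_div_assoc]⟩
  rw [hvc_eq]
  exact lt_add_of_pos_right _ (hxm.2.resolve_left hx0)

end LQTStep

lemma exists_mem_of_mul_mem_of_isLQTAlong {F : Type} [Field F] {v : F → ℤ}
    (hmul : ∀ a b : F, a ≠ 0 → b ≠ 0 → v (a * b) = v a + v b) (R : ℕ → Subring F)
    (hnonneg : ∀ n, ∀ c ∈ R n, c ≠ 0 → 0 ≤ v c)
    (hdom : ∀ n, ∀ a ∈ R n, a ≠ 0 → v a = 0 → ∃ b ∈ R n, a * b = 1)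
    (hLQT : ∀ n, IsLQTAlong F v (R n) (R (n + 1))) {a : F} (ha : a ≠ 0) (hva : 0 ≤ v a)
    {n : ℕ} {b c : F} (hb : b ∈ R n) (hc : c ∈ R n) (hc0 : c ≠ 0) (habc : a * c = b) :
    ∃ m, a ∈ R m := by
  induction hk : (v c).toNat using Nat.strong_induction_on generalizing n b c with
  | _ k ih =>
  rcases (hnonneg n c hc hc0).eq_or_lt with hvc | hvc
  · obtain ⟨d, hd, hcd⟩ := hdom n c hc hc0 hvc.symm
    have had : a = b * d := by rw [← habc, mul_assoc, hcd, mul_one]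
    exact ⟨n, had ▸ mul_mem hb hd⟩
  · obtain ⟨b', hb', c', hc', hc'0, hlt, habc'⟩ :=
      (hLQT n).exists_mul_eq_of_val_lt hmul ha hva hb hc hc0 hvc habc
    exact ih _ (by omega) hb' hc' hc'0 habc' rfl

theorem dvr_eq_union_of_lqt_sequence_general
    (F : Type) [Field F] (v : F → ℤ)
    (hmul : ∀ a b : F, a ≠ 0 → b ≠ 0 → v (a * b) = v a + v b)
    (V : Subring F) (hV : ∀ a : F, a ≠ 0 → (a ∈ V ↔ 0 ≤ v a))
    (R : ℕ → Subring F)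
    (hsub : ∀ n, (R n : Set F) ⊆ V)
    (hdom : ∀ n, ∀ a ∈ R n, a ≠ 0 → v a = 0 → ∃ b ∈ R n, a * b = 1)
    (hfrac : ∀ y : F, ∃ a ∈ R 0, ∃ b ∈ R 0, b ≠ 0 ∧ y * b = a)
    (hLQT : ∀ n, IsLQTAlong F v (R n) (R (n + 1))) :
    (V : Set F) = ⋃ n, (R n : Set F) := by
  have hnonneg : ∀ n, ∀ c ∈ R n, c ≠ 0 → 0 ≤ v c := fun n c hc hc0 =>
    (hV c hc0).mp (hsub n hc)
  refine subset_antisymm (fun a haV => Set.mem_iUnion.mpr ?_) (Set.iUnion_subset hsub)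
  by_cases ha : a = 0
  · exact ⟨0, ha ▸ (R 0).zero_mem⟩
  obtain ⟨b, hb, c, hc, hc0, habc⟩ := hfrac a
  exact exists_mem_of_mul_mem_of_isLQTAlong hmul R hnonneg hdom hLQT ha ((hV a ha).mp haV)
    hb hc hc0 habc

/-- Let `(R₀, m₀)` be a Noetherian local domain with quotient field `F`, birationally
dominated by a rank 1 discrete valuation ring `V` (given by a `ℤ`-valued valuation `v`
on `F` with value group `ℤ`).  Then `V` equals the union of the sequence of local
quadratic transforms of `R₀` along `V`. -/
theorem dvr_eq_union_of_lqt_sequence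
    (F : Type) [Field F] (v : F → ℤ)
    (hmul : ∀ a b : F, a ≠ 0 → b ≠ 0 → v (a * b) = v a + v b)
    (hadd : ∀ a b : F, a ≠ 0 → b ≠ 0 → a + b ≠ 0 → min (v a) (v b) ≤ v (a + b))
    (hval1 : ∃ a : F, a ≠ 0 ∧ v a = 1)
    (V : Subring F) (hV : ∀ a : F, a ≠ 0 → (a ∈ V ↔ 0 ≤ v a))
    (R : ℕ → Subring F)
    (hNoeth : ∀ n, IsNoetherianRing (R n)) (hLocal : ∀ n, IsLocalRing (R n))
    (hsub : ∀ n, (R n : Set F) ⊆ V)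
    (hdom : ∀ n, ∀ a ∈ R n, a ≠ 0 → v a = 0 → ∃ b ∈ R n, a * b = 1)
    (hfrac : ∀ y : F, ∃ a ∈ R 0, ∃ b ∈ R 0, b ≠ 0 ∧ y * b = a)
    (hLQT : ∀ n, IsLQTAlong F v (R n) (R (n + 1))) :
    (V : Set F) = ⋃ n, (R n : Set F) :=
  dvr_eq_union_of_lqt_sequence_general F v hmul V hV R hsub hdom hfrac hLQT
end

section
/- With notation as in the correspondence of local quadratic transform sequences along R_P: let S = ⋃ R_n, let S̄ = ⋃ R̄_n (the union of the corresponding quadratic transforms of R/P), and let S̃ = α⁻¹(S̄) be the pullback of S̄ along the residue map α : R_P → κ(P). Then S̃ = S + PR_P, and S̃ is non-archimedean. -/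
/-!
Since `ker α = PR_P`, an element of `R_P` lies in `S̃` exactly when it differs from an element
of some `Rₙ` by an element of `PR_P`; this is `S̃ = S + PR_P`.

For non-archimedeanity take `x ∈ m_R \ P`. It stays a nonunit in every `Rₙ`, and every `Rₙ` is
local. If `x b = 1` with `b ∈ S̃`, then `α b = α z` for some `z ∈ Rₙ`, so `α (x z) = 1`; as
`ker α ∩ Rₙ` is a proper ideal of the local ring `Rₙ`, this makes `x z` a unit of `Rₙ`, which is
absurd. Finally a nonzero `q ∈ P` is divisible in `PR_P ⊆ S̃` by every power of `x ∉ P`.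
-/

section GenLQT

variable (F : Type) [Field F]

/-- The nonunits of a local subring `A` of a field `F`. -/
def genMaxSet (A : Subring F) : Set F :=
  {a | a ∈ A ∧ ¬ ∃ b ∈ A, a * b = 1}

/-- The ring `A[m_A/x]`. -/
def genBlowup (A : Subring F) (x : F) : Subring F :=
  Subring.closure ((A : Set F) ∪ {y | ∃ a ∈ genMaxSet F A, y * x = a})

/-- `A'` is a local quadratic transform of the local subring `A` of `F`. -/
def IsGenLQT (A A' : Subring F) : Prop :=
  ∃ x ∈ genMaxSet F A, x ≠ 0 ∧
    ∃ Q : Ideal (genBlowup F A x), Q.IsPrime ∧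
      (∀ a ∈ genMaxSet F A, ∃ q : genBlowup F A x, q ∈ Q ∧ (q : F) = a) ∧
      (A' : Set F) = {y | ∃ b s : genBlowup F A x, s ∉ Q ∧ y * (s : F) = (b : F)}

/-- The pullback `α⁻¹(T)` of a subset `T` of `κ(P)` along the residue map
`α : R_P → κ(P)`, viewed as a subset of `F`. -/
def pullbackSet (RP : Subring F) (K : Type) [Field K] (α : RP →+* K) (T : Set K) :
    Set F :=
  {y | ∃ h : y ∈ RP, α ⟨y, h⟩ ∈ T}

end GenLQT

variable {F : Type} [Field F]

theorem mem_genMaxSet_iff {A : Subring F} {a : F} :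
    a ∈ genMaxSet F A ↔ ∃ h : a ∈ A, ¬ IsUnit (⟨a, h⟩ : A) := by
  simp only [genMaxSet, Set.mem_ofPred_eq, isUnit_iff_exists_inv, Subtype.exists,
    Subtype.ext_iff, Subring.coe_mul, Subring.coe_one, exists_prop]

section Localization

variable {B : Subring F} {Q : Ideal B} {A' : Subring F}

theorem mem_genMaxSet_of_coe_eq_localization (hQ : Q.IsPrime)
    (hA' : (A' : Set F) = {y | ∃ b s : B, s ∉ Q ∧ y * (s : F) = (b : F)})
    {y : F} {q s : B} (hq : q ∈ Q) (hs : s ∉ Q) (hys : y * (s : F) = (q : F)) :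
    y ∈ genMaxSet F A' := by
  refine ⟨by rw [← SetLike.mem_coe, hA']; exact ⟨q, s, hs, hys⟩, ?_⟩
  rintro ⟨c, hc, hyc⟩
  rw [← SetLike.mem_coe, hA'] at hc
  obtain ⟨b', s', hs', hcs'⟩ := hc
  have hqb' : q * b' = s * s' := Subtype.ext <| by
    push_cast
    calc (q : F) * b' = (y * c) * (s * s') := by rw [← hys, ← hcs']; ring
      _ = s * s' := by rw [hyc, one_mul]
  exact (hQ.mem_or_mem (hqb' ▸ Q.mul_mem_right b' hq)).elim hs hs'

theorem exists_mul_eq_one_of_coe_eq_localization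
    (hA' : (A' : Set F) = {y | ∃ b s : B, s ∉ Q ∧ y * (s : F) = (b : F)})
    {y : F} {b s : B} (hb : b ∉ Q) (hys : y * (s : F) = (b : F)) :
    ∃ c ∈ A', y * c = 1 := by
  have hb0 : (b : F) ≠ 0 := fun h => hb (by rw [show b = 0 from Subtype.ext h]; exact Q.zero_mem)
  refine ⟨s / b, ?_, by rw [← mul_div_assoc, hys, div_self hb0]⟩
  rw [← SetLike.mem_coe, hA']
  exact ⟨s, b, hb, by field_simp⟩

theorem exists_mul_eq_mem_of_mem_genMaxSet
    (hA' : (A' : Set F) = {y | ∃ b s : B, s ∉ Q ∧ y * (s : F) = (b : F)})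
    {y : F} (hy : y ∈ genMaxSet F A') :
    ∃ q s : B, q ∈ Q ∧ s ∉ Q ∧ y * (s : F) = (q : F) := by
  obtain ⟨hyA', hnu⟩ := hy
  rw [← SetLike.mem_coe, hA'] at hyA'
  obtain ⟨b, s, hs, hys⟩ := hyA'
  by_cases hb : b ∈ Q
  · exact ⟨b, s, hb, hs, hys⟩
  · exact (hnu (exists_mul_eq_one_of_coe_eq_localization hA' hb hys)).elim

theorem add_mem_genMaxSet_of_coe_eq_localization (hQ : Q.IsPrime)
    (hA' : (A' : Set F) = {y | ∃ b s : B, s ∉ Q ∧ y * (s : F) = (b : F)})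
    {y₁ y₂ : F} (h₁ : y₁ ∈ genMaxSet F A') (h₂ : y₂ ∈ genMaxSet F A') :
    y₁ + y₂ ∈ genMaxSet F A' := by
  obtain ⟨q₁, s₁, hq₁, hs₁, e₁⟩ := exists_mul_eq_mem_of_mem_genMaxSet hA' h₁
  obtain ⟨q₂, s₂, hq₂, hs₂, e₂⟩ := exists_mul_eq_mem_of_mem_genMaxSet hA' h₂
  refine mem_genMaxSet_of_coe_eq_localization hQ hA'
    (Q.add_mem (Q.mul_mem_right s₂ hq₁) (Q.mul_mem_right s₁ hq₂))
    (fun h => (hQ.mem_or_mem h).elim hs₁ hs₂) ?_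
  push_cast
  rw [← e₁, ← e₂]
  ring

theorem isLocalRing_of_coe_eq_localization (hQ : Q.IsPrime)
    (hA' : (A' : Set F) = {y | ∃ b s : B, s ∉ Q ∧ y * (s : F) = (b : F)}) :
    IsLocalRing A' := by
  refine IsLocalRing.of_nonunits_add fun a b ha hb => ?_
  obtain ⟨_, hab⟩ := mem_genMaxSet_iff.1 <| add_mem_genMaxSet_of_coe_eq_localization hQ hA'
    (mem_genMaxSet_iff.2 ⟨a.2, ha⟩) (mem_genMaxSet_iff.2 ⟨b.2, hb⟩)
  exact hab

end Localization

namespace IsGenLQT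

variable {A A' : Subring F}

theorem genMaxSet_subset (h : IsGenLQT F A A') : genMaxSet F A ⊆ genMaxSet F A' := by
  intro y hy
  obtain ⟨x, -, -, Q, hQ, hQm, hA'⟩ := h
  obtain ⟨q, hqQ, hq⟩ := hQm y hy
  exact mem_genMaxSet_of_coe_eq_localization hQ hA' hqQ ((Ideal.ne_top_iff_one Q).1 hQ.ne_top)
    (by simp [hq])

theorem isLocalRing (h : IsGenLQT F A A') : IsLocalRing A' := by
  obtain ⟨x, -, -, Q, hQ, -, hA'⟩ := h
  exact isLocalRing_of_coe_eq_localization hQ hA'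

end IsGenLQT

section Sequence

variable {seq : ℕ → Subring F}

theorem IsGenLQT.isLocalRing_seq (hseq : ∀ n, IsGenLQT F (seq n) (seq (n + 1)))
    [IsLocalRing (seq 0)] : ∀ n, IsLocalRing (seq n)
  | 0 => ‹_›
  | n + 1 => (hseq n).isLocalRing

theorem IsGenLQT.monotone_genMaxSet_seq (hseq : ∀ n, IsGenLQT F (seq n) (seq (n + 1))) :
    Monotone fun n => genMaxSet F (seq n) :=
  monotone_nat_of_le_succ fun n => (hseq n).genMaxSet_subset

end Sequence

theorem IsLocalRing.isUnit_of_map_eq_one {A K : Type*} [CommRing A] [IsLocalRing A] [Ring K]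
    [Nontrivial K] (f : A →+* K) {a : A} (ha : f a = 1) : IsUnit a := by
  have hker : 1 - a ∈ IsLocalRing.maximalIdeal A :=
    IsLocalRing.le_maximalIdeal (RingHom.ker_ne_top f) (by simp [RingHom.mem_ker, ha])
  simpa using IsLocalRing.isUnit_one_sub_self_of_mem_nonunits _ hker

section Pullback

variable {ι : Type*} {RP : Subring F} {K : Type} [Field K] (α : RP →+* K)
  {A : ι → Subring F}

theorem pullbackSet_iUnion_map_eq (hA : ∀ i, A i ≤ RP) {I : Set F}
    (hI : ∀ p, p ∈ I ↔ ∃ h : p ∈ RP, α ⟨p, h⟩ = 0) :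
    pullbackSet F RP K α (⋃ i, (Subring.map α (Subring.comap RP.subtype (A i)) : Set K)) =
      {y | ∃ s p : F, (∃ i, s ∈ A i) ∧ p ∈ I ∧ y = s + p} := by
  ext y
  simp only [pullbackSet, Set.mem_iUnion, SetLike.mem_coe, Subring.mem_map, Subring.mem_comap,
    Subring.coe_subtype, Set.mem_ofPred_eq]
  constructor
  · rintro ⟨hy, i, w, hw, hαw⟩
    refine ⟨w, y - w, ⟨i, hw⟩, (hI _).2 ⟨RP.sub_mem hy w.2, ?_⟩, by ring⟩
    rw [show (⟨y - w, _⟩ : RP) = ⟨y, hy⟩ - w from rfl, map_sub, hαw, sub_self]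
  · rintro ⟨s, p, ⟨i, hs⟩, hp, rfl⟩
    obtain ⟨hpRP, hαp⟩ := (hI p).1 hp
    refine ⟨RP.add_mem (hA i hs) hpRP, i, ⟨s, hA i hs⟩, hs, ?_⟩
    rw [show (⟨s + p, _⟩ : RP) = ⟨s, hA i hs⟩ + ⟨p, hpRP⟩ from rfl, map_add, hαp, add_zero]

theorem not_exists_mem_pullbackSet_mul_eq_one (hA : ∀ i, A i ≤ RP)
    (hloc : ∀ i, IsLocalRing (A i)) {x : F} (hx : ∀ i, x ∈ genMaxSet F (A i)) :
    ¬ ∃ b ∈ pullbackSet F RP K α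
        (⋃ i, (Subring.map α (Subring.comap RP.subtype (A i)) : Set K)), x * b = 1 := by
  rintro ⟨b, ⟨hb, hbT⟩, hxb⟩
  simp only [Set.mem_iUnion, SetLike.mem_coe, Subring.mem_map, Subring.mem_comap,
    Subring.coe_subtype] at hbT
  obtain ⟨i, z, hz, hαz⟩ := hbT
  obtain ⟨hxA, hxnu⟩ := mem_genMaxSet_iff.1 (hx i)
  let f : A i →+* K := α.comp (Subring.inclusion (hA i))
  have hf : f (⟨x, hxA⟩ * ⟨z, hz⟩) = 1 := by
    calc f (⟨x, hxA⟩ * ⟨z, hz⟩) = α (⟨x, hA i hxA⟩ * ⟨b, hb⟩) := by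
          rw [map_mul, map_mul, ← hαz]; rfl
      _ = 1 := by rw [show (⟨x, hA i hxA⟩ * ⟨b, hb⟩ : RP) = 1 from Subtype.ext hxb, map_one]
  have := hloc i
  exact hxnu (isUnit_of_mul_isUnit_left (IsLocalRing.isUnit_of_map_eq_one f hf))

end Pullback

theorem pullback_of_union_eq_sum_and_nonarchimedean_general
    (F : Type) [Field F] (R : Subring F)
    [IsLocalRing R]
    (P : Ideal R) (hPp : P.IsPrime) (hPne : P ≠ ⊥)
    (hPnm : P ≠ IsLocalRing.maximalIdeal R)
    (RP : Subring F)
    (hRP : (RP : Set F) = {y : F | ∃ a s : R, s ∉ P ∧ y * (s : F) = (a : F)})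
    (K : Type) [Field K] (α : RP →+* K)
    (hker : ∀ y : RP, α y = 0 ↔
      ∃ p s : R, p ∈ P ∧ s ∉ P ∧ (y : F) * (s : F) = (p : F))
    (seq : ℕ → Subring F) (hseq0 : seq 0 = R)
    (hseq : ∀ n, IsGenLQT F (seq n) (seq (n + 1)) ∧ seq n ≤ RP) :
    pullbackSet F RP K α
        (⋃ n, (Subring.map α (Subring.comap RP.subtype (seq n)) : Set K)) =
      {y : F | ∃ s p : F, (∃ n, s ∈ seq n) ∧
        (∃ q t : R, q ∈ P ∧ t ∉ P ∧ p * (t : F) = (q : F)) ∧ y = s + p} ∧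
    ∃ x ∈ pullbackSet F RP K α
        (⋃ n, (Subring.map α (Subring.comap RP.subtype (seq n)) : Set K)),
      (¬ ∃ b ∈ pullbackSet F RP K α
          (⋃ n, (Subring.map α (Subring.comap RP.subtype (seq n)) : Set K)),
        x * b = 1) ∧
      ∃ y₀ : F, y₀ ≠ 0 ∧ ∀ n : ℕ,
        ∃ d ∈ pullbackSet F RP K α
          (⋃ n, (Subring.map α (Subring.comap RP.subtype (seq n)) : Set K)),
        y₀ = x ^ (n + 1) * d := by
  subst hseq0
  have hPR_P : ∀ p : F, p ∈ {p : F | ∃ q t : seq 0, q ∈ P ∧ t ∉ P ∧ p * (t : F) = (q : F)} ↔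
      ∃ h : p ∈ RP, α ⟨p, h⟩ = 0 := by
    refine fun p => ⟨fun hp => ?_, fun ⟨h, hp⟩ => (hker ⟨p, h⟩).1 hp⟩
    have hpRP : p ∈ RP := by
      obtain ⟨q, t, -, ht, hpt⟩ := hp
      rw [← SetLike.mem_coe, hRP]
      exact ⟨q, t, ht, hpt⟩
    exact ⟨hpRP, (hker ⟨p, hpRP⟩).2 hp⟩
  have hS := pullbackSet_iUnion_map_eq α (fun n => (hseq n).2) hPR_P
  refine ⟨hS, ?_⟩
  obtain ⟨x, hxm, hxP⟩ :=
    SetLike.exists_of_lt (lt_of_le_of_ne (IsLocalRing.le_maximalIdeal hPp.ne_top) hPnm)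
  have hx : ∀ n, (x : F) ∈ genMaxSet F (seq n) := fun n =>
    IsGenLQT.monotone_genMaxSet_seq (fun n => (hseq n).1) (Nat.zero_le n)
      (mem_genMaxSet_iff.2 ⟨x.2, hxm⟩)
  obtain ⟨q, hqP, hq0⟩ := Submodule.exists_mem_ne_zero_of_ne_bot hPne
  have hxpow (n : ℕ) : (x : F) ^ (n + 1) ≠ 0 :=
    pow_ne_zero _ fun h => hxP (by rw [show x = 0 from Subtype.ext h]; exact P.zero_mem)
  refine ⟨x, hS.ge ⟨x, 0, ⟨0, x.2⟩, (hPR_P 0).2 ⟨RP.zero_mem, map_zero α⟩, (add_zero _).symm⟩,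
    not_exists_mem_pullbackSet_mul_eq_one α (fun n => (hseq n).2)
      (IsGenLQT.isLocalRing_seq fun n => (hseq n).1) hx,
    q, fun h => hq0 (Subtype.ext h), fun n => ⟨q / (x : F) ^ (n + 1), hS.ge ?_, ?_⟩⟩
  · refine ⟨0, _, ⟨0, zero_mem _⟩,
      ⟨q, x ^ (n + 1), hqP, fun h => hxP (hPp.mem_of_pow_mem _ h), ?_⟩, (zero_add _).symm⟩
    push_cast
    exact div_mul_cancel₀ _ (hxpow n)
  · exact (mul_div_cancel₀ _ (hxpow n)).symm

/-- With `{Rₙ}` a sequence of local quadratic transforms of a Noetherian local domain `R`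
along `R_P`, let `S = ⋃ Rₙ`, let `S̄ = ⋃ R̄ₙ` be the union of the corresponding quadratic
transforms of `R/P`, and let `S̃ = α⁻¹(S̄)` be the pullback of `S̄` along the residue map
`α : R_P → κ(P)`.  Then `S̃ = S + PR_P`, and `S̃` is non-archimedean. -/
theorem pullback_of_union_eq_sum_and_nonarchimedean
    (F : Type) [Field F] (R : Subring F)
    [IsNoetherianRing R] [IsLocalRing R]
    (hfrac : ∀ y : F, ∃ a b : R, b ≠ 0 ∧ y * (b : F) = (a : F))
    (P : Ideal R) (hPp : P.IsPrime) (hPne : P ≠ ⊥)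
    (hPnm : P ≠ IsLocalRing.maximalIdeal R)
    (RP : Subring F)
    (hRP : (RP : Set F) = {y : F | ∃ a s : R, s ∉ P ∧ y * (s : F) = (a : F)})
    (K : Type) [Field K] (α : RP →+* K) (hαsurj : Function.Surjective α)
    (hker : ∀ y : RP, α y = 0 ↔
      ∃ p s : R, p ∈ P ∧ s ∉ P ∧ (y : F) * (s : F) = (p : F))
    (seq : ℕ → Subring F) (hseq0 : seq 0 = R)
    (hseq : ∀ n, IsGenLQT F (seq n) (seq (n + 1)) ∧ seq n ≤ RP) :
    pullbackSet F RP K α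
        (⋃ n, (Subring.map α (Subring.comap RP.subtype (seq n)) : Set K)) =
      {y : F | ∃ s p : F, (∃ n, s ∈ seq n) ∧
        (∃ q t : R, q ∈ P ∧ t ∉ P ∧ p * (t : F) = (q : F)) ∧ y = s + p} ∧
    ∃ x ∈ pullbackSet F RP K α
        (⋃ n, (Subring.map α (Subring.comap RP.subtype (seq n)) : Set K)),
      (¬ ∃ b ∈ pullbackSet F RP K α
          (⋃ n, (Subring.map α (Subring.comap RP.subtype (seq n)) : Set K)),
        x * b = 1) ∧
      ∃ y₀ : F, y₀ ≠ 0 ∧ ∀ n : ℕ,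
        ∃ d ∈ pullbackSet F RP K α
          (⋃ n, (Subring.map α (Subring.comap RP.subtype (seq n)) : Set K)),
        y₀ = x ^ (n + 1) * d :=
  pullback_of_union_eq_sum_and_nonarchimedean_general F R P hPp hPne hPnm RP hRP K α hker seq hseq0
    hseq
end
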